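/- Let E ⊂ ℝ^N be a set of locally finite perimeter, let ā > 0, and suppose H^{N-1}(∂*E ∩ (−ā/2, ā/2)^N) ≤ (1+2ρ) ā^{N-1} for some ρ ≤ 1/2. Then there exists a ∈ (ā/2, ā) such that H^{N-2}(∂*E ∩ (∂(−a/2,a/2)^{N-1} × (−ā/2, ā/2))) ≤ 2^{N+1} a^{N-2}. -/

import Mathlib

/-!
The sup norm `f` of the first `n` coordinates is 1-Lipschitz and its level set `{f = a/2}` cuts
the lateral boundary of the cylinder of side `a` out of the cube. By Eilenberg's inequality
`∫ μH[n-1] (A ∩ {f = t}) dt ≤ μH[n] A ≤ 2 ā^n` over `t ∈ (ā/4, ā/2)`, an interval of length `ā/4`,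
so some slice has measure at most `8 ā^(n-1) ≤ 2^(n+2) a^(n-1)`. Since `t ↦ μH[n-1] (A ∩ {f = t})`
need not be measurable, the inequality is used at each scale `1/k` through a measurable
majorant built from a near-optimal cover, and the equality case `ρ = 1/2` is excluded by a margin
`1/j` gained on a set of positive measure.
-/

open MeasureTheory Set Filter Topology Metric
open scoped ENNReal

namespace MeasureTheory

section Approx

variable {X : Type*} [EMetricSpace X]

/-- The size-`r` approximation `H^d_r` of the Hausdorff measure, `μH[d] = ⨆ r > 0, H^d_r`. -/
noncomputable def hausdorffApprox (d : ℝ) (r : ℝ≥0∞) (s : Set X) : ℝ≥0∞ :=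
  ⨅ (t : ℕ → Set X) (_ : s ⊆ ⋃ n, t n) (_ : ∀ n, ediam (t n) ≤ r),
    ∑' n, ⨆ _ : (t n).Nonempty, ediam (t n) ^ d

theorem hausdorffApprox_le_of_cover (d : ℝ) {r : ℝ≥0∞} {s : Set X} (t : ℕ → Set X)
    (hs : s ⊆ ⋃ n, t n) (ht : ∀ n, ediam (t n) ≤ r) :
    hausdorffApprox d r s ≤ ∑' n, ⨆ _ : (t n).Nonempty, ediam (t n) ^ d :=
  iInf₂_le_of_le t hs (iInf_le _ ht)

theorem exists_cover_of_hausdorffApprox_lt {d : ℝ} {r : ℝ≥0∞} {s : Set X} {a : ℝ≥0∞}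
    (h : hausdorffApprox d r s < a) :
    ∃ t : ℕ → Set X, s ⊆ ⋃ n, t n ∧ (∀ n, ediam (t n) ≤ r) ∧
      ∑' n, ⨆ _ : (t n).Nonempty, ediam (t n) ^ d < a := by
  simpa only [hausdorffApprox, iInf_lt_iff, exists_prop] using h

theorem hausdorffApprox_anti (d : ℝ) (s : Set X) :
    Antitone fun r => hausdorffApprox d r s :=
  fun _ _ hrr' => le_iInf₂ fun t hs => le_iInf fun ht =>
    hausdorffApprox_le_of_cover d t hs fun n => (ht n).trans hrr'

theorem hausdorffApprox_inv_nat_mono (d : ℝ) (s : Set X) :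
    Monotone fun k : ℕ => hausdorffApprox d (k : ℝ≥0∞)⁻¹ s :=
  fun _ _ hkl => hausdorffApprox_anti d s (ENNReal.inv_le_inv.2 (by exact_mod_cast hkl))

theorem tendsto_hausdorffApprox_inv_nat [MeasurableSpace X] [BorelSpace X] (d : ℝ) (s : Set X) :
    Tendsto (fun k : ℕ => hausdorffApprox d (k : ℝ≥0∞)⁻¹ s) atTop (𝓝 (μH[d] s)) := by
  have hsup : μH[d] s = ⨆ k : ℕ, hausdorffApprox d (k : ℝ≥0∞)⁻¹ s := by
    rw [Measure.hausdorffMeasure_apply]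
    refine le_antisymm (iSup₂_le fun r hr => ?_)
      (iSup_le fun k => le_iSup₂_of_le (f := fun r (_ : 0 < r) => hausdorffApprox d r s)
        (k : ℝ≥0∞)⁻¹ (ENNReal.inv_pos.2 (ENNReal.natCast_ne_top k)) le_rfl)
    obtain ⟨k, hk⟩ := ENNReal.exists_inv_nat_lt hr.ne'
    exact le_iSup_of_le k (hausdorffApprox_anti d s hk.le)
  rw [hsup]
  exact tendsto_atTop_iSup (hausdorffApprox_inv_nat_mono d s)

theorem hausdorffApprox_inv_nat_le_hausdorffMeasure [MeasurableSpace X] [BorelSpace X]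
    (d : ℝ) (s : Set X) (k : ℕ) : hausdorffApprox d (k : ℝ≥0∞)⁻¹ s ≤ μH[d] s :=
  (hausdorffApprox_inv_nat_mono d s).ge_of_tendsto (tendsto_hausdorffApprox_inv_nat d s) k

end Approx

section Slicing

variable {X : Type*} [EMetricSpace X] {f : X → ℝ}

theorem ediam_rpow_mul_volume_image_le (hf : LipschitzWith 1 f) {d : ℝ} (hd : 0 ≤ d)
    (s : Set X) : ediam s ^ d * volume (f '' s) ≤ ⨆ _ : s.Nonempty, ediam s ^ (d + 1) := by
  rcases s.eq_empty_or_nonempty with rfl | hs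
  · simp
  calc ediam s ^ d * volume (f '' s) ≤ ediam s ^ d * ediam s := by
        gcongr
        simpa using (Real.volume_le_diam _).trans (hf.ediam_image_le s)
    _ = ⨆ _ : s.Nonempty, ediam s ^ (d + 1) := by
        rw [ciSup_pos hs, ENNReal.rpow_add_of_nonneg _ _ hd zero_le_one, ENNReal.rpow_one]

/-- Eilenberg's inequality at scale `r`: the majorant is `∑ U, ediam U ^ d • 𝟙 (f '' U)` for a
near-optimal cover of `A`, and `f '' U` has length at most `ediam U`. -/
theorem exists_measurable_ge_hausdorffApprox_slice (hf : LipschitzWith 1 f) {d : ℝ}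
    (hd : 0 ≤ d) {r : ℝ≥0∞} {A : Set X} {a : ℝ≥0∞} (h : hausdorffApprox (d + 1) r A < a) :
    ∃ g : ℝ → ℝ≥0∞, Measurable g ∧
      (∀ t, hausdorffApprox d r (A ∩ f ⁻¹' {t}) ≤ g t) ∧ ∫⁻ t, g t < a := by
  obtain ⟨U, hAU, hUr, hsum⟩ := exists_cover_of_hausdorffApprox_lt h
  set V : ℕ → Set ℝ := fun j => toMeasurable volume (f '' U j)
  have hV : ∀ j, MeasurableSet (V j) := fun j => measurableSet_toMeasurable _ _
  refine ⟨fun t => ∑' j, (V j).indicator (fun _ => ediam (U j) ^ d) t,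
    Measurable.tsum fun j => measurable_const.indicator (hV j), fun t => ?_, ?_⟩
  · have hcover : A ∩ f ⁻¹' {t} ⊆ ⋃ j, U j ∩ (A ∩ f ⁻¹' {t}) := fun x hx =>
      mem_iUnion.2 ((mem_iUnion.1 (hAU hx.1)).imp fun _ hj => ⟨hj, hx⟩)
    refine (hausdorffApprox_le_of_cover d _ hcover fun j =>
      (ediam_mono inter_subset_left).trans (hUr j)).trans (ENNReal.tsum_le_tsum fun j => ?_)
    refine iSup_le fun ⟨x, hxU, _, hxt⟩ => ?_
    have htV : t ∈ V j := subset_toMeasurable _ _ ⟨x, hxU, hxt⟩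
    rw [indicator_of_mem htV]
    exact ENNReal.rpow_le_rpow (ediam_mono inter_subset_left) hd
  · rw [lintegral_tsum fun j => (measurable_const.indicator (hV j)).aemeasurable]
    refine lt_of_le_of_lt (ENNReal.tsum_le_tsum fun j => ?_) hsum
    rw [lintegral_indicator_const (hV j), measure_toMeasurable]
    exact ediam_rpow_mul_volume_image_le hf hd (U j)

end Slicing

theorem add_mul_meas_ge_le_lintegral {α : Type*} [MeasurableSpace α] {μ : Measure α}
    {g : α → ℝ≥0∞} (hg : Measurable g) (c ε : ℝ≥0∞) :
    c * μ {x | c ≤ g x} + ε * μ {x | c + ε ≤ g x} ≤ ∫⁻ x, g x ∂μ := by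
  have hG : MeasurableSet {x | c ≤ g x} := measurableSet_le measurable_const hg
  have hG' : MeasurableSet {x | c + ε ≤ g x} := measurableSet_le measurable_const hg
  have hle : ∀ x, {x | c ≤ g x}.indicator (fun _ => c) x
      + {x | c + ε ≤ g x}.indicator (fun _ => ε) x ≤ g x := by
    intro x
    simp only [indicator_apply, mem_ofPred_eq]
    split_ifs with h h' h'
    · exact h'
    · simpa using h
    · exact absurd (le_self_add.trans h') h
    · simp
  calc c * μ {x | c ≤ g x} + ε * μ {x | c + ε ≤ g x}
      = ∫⁻ x, {x | c ≤ g x}.indicator (fun _ => c) x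
          + {x | c + ε ≤ g x}.indicator (fun _ => ε) x ∂μ := by
        rw [lintegral_add_left (measurable_const.indicator hG), lintegral_indicator_const hG,
          lintegral_indicator_const hG']
    _ ≤ ∫⁻ x, g x ∂μ := lintegral_mono hle

theorem exists_hausdorffMeasure_inter_preimage_le {X : Type*} [EMetricSpace X]
    [MeasurableSpace X] [BorelSpace X] {f : X → ℝ} (hf : LipschitzWith 1 f) {d : ℝ} (hd : 0 ≤ d)
    {A : Set X} {T : Set ℝ} (hT : volume T ≠ 0) {c : ℝ≥0∞} (hcT : c * volume T ≠ ∞)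
    (hA : μH[d + 1] A ≤ c * volume T) : ∃ t ∈ T, μH[d] (A ∩ f ⁻¹' {t}) ≤ c := by
  by_contra! hlt
  set F : ℕ → ℝ → ℝ≥0∞ := fun k t => hausdorffApprox d (k : ℝ≥0∞)⁻¹ (A ∩ f ⁻¹' {t})
  have hF : ∀ t, Monotone fun k => F k t := fun t => hausdorffApprox_inv_nat_mono d _
  set T' : ℕ → Set ℝ := fun k => {t ∈ T | c + (k : ℝ≥0∞)⁻¹ < F k t}
  have hT'_mono : Monotone T' := fun k l hkl t ⟨ht, hkt⟩ =>
    ⟨ht, lt_of_le_of_lt (by gcongr) (hkt.trans_le (hF t hkl))⟩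
  have hT'_cover : T ⊆ ⋃ k, T' k := by
    intro t ht
    have hc : Tendsto (fun k : ℕ => c + (k : ℝ≥0∞)⁻¹) atTop (𝓝 c) := by
      simpa using tendsto_const_nhds.add ENNReal.tendsto_inv_nat_nhds_zero
    obtain ⟨k, hk⟩ := (hc.eventually_lt (tendsto_hausdorffApprox_inv_nat d _) (hlt t ht)).exists
    exact mem_iUnion.2 ⟨k, ht, hk⟩
  obtain ⟨j, hj⟩ : ∃ j, volume (T' j) ≠ 0 := by
    by_contra! h
    exact hT (measure_mono_null hT'_cover (measure_iUnion_null h))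
  -- On `T' j` the slices beat `c` by the fixed margin `1/j`, which makes the final bound strict.
  have hbound : ∀ k ≥ j, c * volume (T' k) + (j : ℝ≥0∞)⁻¹ * volume (T' j) ≤ μH[d + 1] A := by
    intro k hjk
    refine le_of_forall_gt fun a ha => ?_
    obtain ⟨g, hg, hFg, hint⟩ := exists_measurable_ge_hausdorffApprox_slice hf hd
      ((hausdorffApprox_inv_nat_le_hausdorffMeasure (d + 1) A k).trans_lt ha)
    calc c * volume (T' k) + (j : ℝ≥0∞)⁻¹ * volume (T' j)
        ≤ c * volume {t | c ≤ g t} + (j : ℝ≥0∞)⁻¹ * volume {t | c + (j : ℝ≥0∞)⁻¹ ≤ g t} := by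
          gcongr
          · exact fun t ht => le_self_add.trans (ht.2.le.trans (hFg t))
          · exact fun t ht => ht.2.le.trans ((hF t hjk).trans (hFg t))
      _ ≤ ∫⁻ t, g t := add_mul_meas_ge_le_lintegral hg _ _
      _ < a := hint
  have hlim : Tendsto (fun k => c * volume (T' k) + (j : ℝ≥0∞)⁻¹ * volume (T' j)) atTop
      (𝓝 (c * volume (⋃ k, T' k) + (j : ℝ≥0∞)⁻¹ * volume (T' j))) :=
    (ENNReal.Tendsto.const_mul (tendsto_measure_iUnion_atTop hT'_mono)
      (Or.inl ((measure_mono_null hT'_cover).mt hT))).add tendsto_const_nhds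
  have hgain : c * volume T < c * volume T + (j : ℝ≥0∞)⁻¹ * volume (T' j) :=
    ENNReal.lt_add_right hcT (mul_ne_zero (ENNReal.inv_ne_zero.2 (ENNReal.natCast_ne_top j)) hj)
  refine hgain.not_ge (le_trans ?_ hA)
  calc c * volume T + (j : ℝ≥0∞)⁻¹ * volume (T' j)
      ≤ c * volume (⋃ k, T' k) + (j : ℝ≥0∞)⁻¹ * volume (T' j) := by
        gcongr
    _ ≤ μH[d + 1] A := le_of_tendsto hlim (eventually_atTop.2 ⟨j, hbound⟩)

end MeasureTheory

/-- The level set at `a / 2` is the lateral boundary `∂(-a/2, a/2)^n × ℝ`. -/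
noncomputable def lateralSupNorm (n : ℕ) (x : EuclideanSpace ℝ (Fin (n + 1))) : ℝ :=
  ‖fun i : Fin n => x i.castSucc‖

theorem lipschitzWith_lateralSupNorm (n : ℕ) : LipschitzWith 1 (lateralSupNorm n) := by
  refine LipschitzWith.of_dist_le_mul fun x y => ?_
  rw [NNReal.coe_one, one_mul]
  calc dist (lateralSupNorm n x) (lateralSupNorm n y)
      ≤ dist (fun i : Fin n => x i.castSucc) (fun i => y i.castSucc) := dist_norm_norm_le _ _
    _ ≤ dist x y := (dist_pi_le_iff dist_nonneg).2 fun i => PiLp.dist_apply_le x y _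

theorem lateralSupNorm_eq {n : ℕ} {x : EuclideanSpace ℝ (Fin (n + 1))} {b : ℝ}
    (hle : ∀ i, i ≠ Fin.last n → x i ∈ Icc (-b) b)
    (hface : ∃ i, i ≠ Fin.last n ∧ (x i = -b ∨ x i = b)) : lateralSupNorm n x = b := by
  obtain ⟨i, hi, hxi⟩ := hface
  obtain ⟨j, rfl⟩ := Fin.exists_castSucc_eq.2 hi
  have hb : |x j.castSucc| = b := by
    have hb0 : 0 ≤ b := by linarith [(hle _ hi).1, (hle _ hi).2]
    rcases hxi with h | h <;> simp [h, abs_of_nonneg hb0]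
  refine le_antisymm ((pi_norm_le_iff_of_nonneg (hb ▸ abs_nonneg _)).2 fun k => ?_) ?_
  · exact Real.norm_eq_abs _ ▸ abs_le.2 (hle _ (Fin.castSucc_lt_last k).ne)
  · exact hb ▸ norm_le_pi_norm (fun k : Fin n => x k.castSucc) j

theorem lateral_boundary_subset_cube_inter_preimage {n : ℕ} {a abar : ℝ} (ha : a < abar) :
    {x : EuclideanSpace ℝ (Fin (n + 1)) |
      (∀ i, i ≠ Fin.last n → x i ∈ Icc (-a / 2) (a / 2)) ∧
      (∃ i, i ≠ Fin.last n ∧ (x i = -a / 2 ∨ x i = a / 2)) ∧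
      x (Fin.last n) ∈ Ioo (-abar / 2) (abar / 2)} ⊆
    {x | ∀ i, x i ∈ Ioo (-abar / 2) (abar / 2)} ∩ lateralSupNorm n ⁻¹' {a / 2} := by
  rintro x ⟨hle, hface, hlast⟩
  refine ⟨fun i => ?_, lateralSupNorm_eq (by simpa only [neg_div] using hle)
    (by simpa only [neg_div] using hface)⟩
  rcases eq_or_ne i (Fin.last n) with rfl | hi
  · exact hlast
  · exact ⟨by linarith [(hle i hi).1], by linarith [(hle i hi).2]⟩

theorem eight_mul_pow_le_two_pow_mul_pow {n : ℕ} (hn : 1 ≤ n) {abar t : ℝ} (habar : 0 ≤ abar)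
    (ht : abar / 4 ≤ t) : 8 * abar ^ (n - 1) ≤ 2 ^ (n + 2) * (2 * t) ^ (n - 1) := by
  rw [show n + 2 = (n - 1) + 3 by omega, show (2 : ℝ) ^ (n - 1 + 3) * (2 * t) ^ (n - 1)
    = 8 * (2 * (2 * t)) ^ (n - 1) by rw [pow_add, mul_pow (2 : ℝ) (2 * t)]; ring]
  gcongr
  linarith

theorem cube_side_selection_general (n : ℕ) (hn : 1 ≤ n)
    (E : Set (EuclideanSpace ℝ (Fin (n + 1))))
    (abar ρ : ℝ) (habar : 0 < abar) (hρ : ρ ≤ 1 / 2)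
    (hper : μH[(n : ℝ)]
        (frontier E ∩ {x : EuclideanSpace ℝ (Fin (n + 1)) |
          ∀ i, x i ∈ Ioo (-abar / 2) (abar / 2)})
      ≤ ENNReal.ofReal ((1 + 2 * ρ) * abar ^ n)) :
    ∃ a ∈ Ioo (abar / 2) abar,
      μH[((n : ℝ) - 1)]
          (frontier E ∩ {x : EuclideanSpace ℝ (Fin (n + 1)) |
            (∀ i, i ≠ Fin.last n → x i ∈ Icc (-a / 2) (a / 2)) ∧
            (∃ i, i ≠ Fin.last n ∧ (x i = -a / 2 ∨ x i = a / 2)) ∧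
            x (Fin.last n) ∈ Ioo (-abar / 2) (abar / 2)})
        ≤ ENNReal.ofReal (2 ^ (n + 2) * a ^ (n - 1)) := by
  set A := frontier E ∩ {x : EuclideanSpace ℝ (Fin (n + 1)) |
    ∀ i, x i ∈ Ioo (-abar / 2) (abar / 2)}
  set c := ENNReal.ofReal (8 * abar ^ (n - 1))
  have hvol : volume (Ioo (abar / 4) (abar / 2)) = ENNReal.ofReal (abar / 4) := by
    rw [Real.volume_Ioo]; ring_nf
  -- `8 ā^(n-1) * |(ā/4, ā/2)| = 2 ā^n ≥ (1 + 2ρ) ā^n`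
  have hmass : μH[(n - 1 : ℝ) + 1] A ≤ c * volume (Ioo (abar / 4) (abar / 2)) := by
    rw [sub_add_cancel, hvol, ← ENNReal.ofReal_mul (by positivity)]
    refine hper.trans (ENNReal.ofReal_le_ofReal ?_)
    rw [← pow_sub_one_mul (by omega : n ≠ 0) abar]
    nlinarith [mul_pos (pow_pos habar (n - 1)) habar]
  obtain ⟨t, ht, hslice⟩ := exists_hausdorffMeasure_inter_preimage_le
    (lipschitzWith_lateralSupNorm n) (by simp [hn]) (by rw [hvol]; positivity)
    (by rw [hvol]; exact ENNReal.mul_ne_top ENNReal.ofReal_ne_top ENNReal.ofReal_ne_top)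
    hmass
  refine ⟨2 * t, ⟨by linarith [ht.1], by linarith [ht.2]⟩, ?_⟩
  calc _ ≤ μH[(n : ℝ) - 1] (A ∩ lateralSupNorm n ⁻¹' {t}) := by
        rw [inter_assoc]
        refine measure_mono (inter_subset_inter_right _ ?_)
        simpa only [mul_div_cancel_left₀ t two_ne_zero] using
          lateral_boundary_subset_cube_inter_preimage (a := 2 * t) (abar := abar)
            (by linarith [ht.2])
    _ ≤ c := hslice
    _ ≤ ENNReal.ofReal (2 ^ (n + 2) * (2 * t) ^ (n - 1)) :=
        ENNReal.ofReal_le_ofReal (eight_mul_pow_le_two_pow_mul_pow hn habar.le ht.1.le)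

/-- Selection of the cube side (Step (i) of the proof of Theorem B): if
`H^{N-1}(∂E ∩ (−ā/2, ā/2)^N) ≤ (1+2ρ) ā^{N-1}` (here `N = n+1`), then there is
`a ∈ (ā/2, ā)` such that the lateral boundary
`∂(−a/2,a/2)^{N-1} × (−ā/2, ā/2)` meets `∂E` in a set of `H^{N-2}`-measure at most
`2^{N+1} a^{N-2}`. -/
theorem cube_side_selection (n : ℕ) (hn : 1 ≤ n)
    (E : Set (EuclideanSpace ℝ (Fin (n + 1))))
    (abar ρ : ℝ) (habar : 0 < abar) (hρ0 : 0 ≤ ρ) (hρ : ρ ≤ 1 / 2)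
    (hper : μH[(n : ℝ)]
        (frontier E ∩ {x : EuclideanSpace ℝ (Fin (n + 1)) |
          ∀ i, x i ∈ Ioo (-abar / 2) (abar / 2)})
      ≤ ENNReal.ofReal ((1 + 2 * ρ) * abar ^ n)) :
    ∃ a ∈ Ioo (abar / 2) abar,
      μH[((n : ℝ) - 1)]
          (frontier E ∩ {x : EuclideanSpace ℝ (Fin (n + 1)) |
            (∀ i, i ≠ Fin.last n → x i ∈ Icc (-a / 2) (a / 2)) ∧
            (∃ i, i ≠ Fin.last n ∧ (x i = -a / 2 ∨ x i = a / 2)) ∧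
            x (Fin.last n) ∈ Ioo (-abar / 2) (abar / 2)})
        ≤ ENNReal.ofReal (2 ^ (n + 2) * a ^ (n - 1)) :=
  cube_side_selection_general n hn E abar ρ habar hρ hper
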